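/- Let (p,q) and (r,s) be coprime integer pairs determining non-adjacent, distinct vertices [p,q] and [r,s] of the Farey graph (that is, |p·s − q·r| ≥ 2). Then [p,q] and [r,s] have exactly two common neighbors in the Farey graph if and only if |p·s − q·r| = 2. -/

import Mathlib

/-- A Farey pair: a pair of coprime integers. -/
abbrev FareyPair : Type := {v : ℤ × ℤ // IsCoprime v.1 v.2}

/-- Identify a coprime pair of integers with its negative. -/
instance fareySetoid : Setoid FareyPair where
  r a b := a.1 = b.1 ∨ a.1 = -b.1
  iseqv := by
    refine ⟨fun a => Or.inl rfl, ?_, ?_⟩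
    · rintro a b (h | h)
      · exact Or.inl h.symm
      · exact Or.inr (by rw [h, neg_neg])
    · rintro a b c (h1 | h1) (h2 | h2)
      · exact Or.inl (h1.trans h2)
      · exact Or.inr (h1.trans h2)
      · exact Or.inr (by rw [h1, h2])
      · exact Or.inl (by rw [h1, h2, neg_neg])

/-- Vertices of the Farey graph: coprime integer pairs up to sign. -/
abbrev FareyVertex : Type := Quotient fareySetoid

/-- The Farey vertex `[p, q]` determined by a coprime pair `(p, q)`. -/
def fareyMk (p q : ℤ) (h : IsCoprime p q) : FareyVertex :=
  Quotient.mk fareySetoid ⟨(p, q), h⟩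

/-- The absolute value of the determinant, descended to Farey vertices. -/
def fareyDetAbs : FareyVertex → FareyVertex → ℤ :=
  Quotient.lift₂ (fun a b : FareyPair => |a.1.1 * b.1.2 - a.1.2 * b.1.1|)
    (by
      rintro a b a' b' (h1 | h1) (h2 | h2)
      · simp only [h1, h2]
      · simp only [h1, h2, Prod.fst_neg, Prod.snd_neg]
        apply abs_eq_abs.mpr
        right; ring
      · simp only [h1, h2, Prod.fst_neg, Prod.snd_neg]
        apply abs_eq_abs.mpr
        right; ring
      · simp only [h1, h2, Prod.fst_neg, Prod.snd_neg]
        apply abs_eq_abs.mpr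
        left; ring)

lemma fareyDetAbs_comm (u v : FareyVertex) : fareyDetAbs u v = fareyDetAbs v u := by
  refine Quotient.inductionOn₂ u v fun a b => ?_
  show |a.1.1 * b.1.2 - a.1.2 * b.1.1| = |b.1.1 * a.1.2 - b.1.2 * a.1.1|
  rw [abs_sub_comm]
  exact congrArg abs (by ring)

/-- The Farey graph: coprime integer pairs up to sign, adjacent when the
determinant is `±1`. -/
def FareyGraph : SimpleGraph FareyVertex where
  Adj u v := fareyDetAbs u v = 1
  symm := by
    constructor
    intro u v h
    rwa [fareyDetAbs_comm]
  loopless := by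
    constructor
    intro u
    refine Quotient.inductionOn u fun a => ?_
    show ¬(|a.1.1 * a.1.2 - a.1.2 * a.1.1| = 1)
    rw [show a.1.1 * a.1.2 - a.1.2 * a.1.1 = 0 from by ring]
    simp

/-- A pair of integers forming a unimodular matrix with another pair is coprime. -/
lemma coprime_of_det (a b c d : ℤ) (h : |a * d - b * c| = 1) : IsCoprime a b := by
  rcases (abs_eq (by norm_num : (0:ℤ) ≤ 1)).mp h with h' | h'
  · exact ⟨d, -c, by linear_combination h'⟩
  · exact ⟨-d, c, by linear_combination -h'⟩

/-!
Write `u = (p, q)`, `v = (r, s)` and `D = det (u, v)`. Cramer's rule gives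
`D • x = det (u, x) • v - det (v, x) • u`, so a common neighbour `±x` of `u` and `v` satisfies
`D • x = v + u` or `D • x = v - u`: there are at most two common neighbours, `(v + u) / D` and
`(v - u) / D`. If both exist then `D ^ 2 * det (x, y) = det (v + u, v - u) = 2 * D`, so `D ∣ 2`.
Conversely, if `|D| = 2` then `u ≡ v mod 2`, since neither pair is `0` mod `2`, so both
candidates are integral, and they are distinct because `D * det (x, y) = 2 ≠ 0`.
-/

section PairDet

variable {R : Type*} [CommRing R]

def pairDet (x y : R × R) : R := x.1 * y.2 - x.2 * y.1

/-- Cramer's rule for `2 × 2` systems. -/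
lemma pairDet_smul_eq_sub (u v x : R × R) :
    pairDet u v • x = pairDet u x • v - pairDet v x • u := by
  ext <;> simp only [pairDet, Prod.smul_fst, Prod.smul_snd, Prod.fst_sub, Prod.snd_sub,
    smul_eq_mul] <;> ring

lemma pairDet_smul_right (c : R) (u x : R × R) : pairDet u (c • x) = c * pairDet u x := by
  simp only [pairDet, Prod.smul_fst, Prod.smul_snd, smul_eq_mul]; ring

lemma pairDet_smul_smul (c d : R) (x y : R × R) :
    pairDet (c • x) (d • y) = c * d * pairDet x y := by
  simp only [pairDet, Prod.smul_fst, Prod.smul_snd, smul_eq_mul]; ring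

lemma pairDet_self (x : R × R) : pairDet x x = 0 := by
  simp only [pairDet]; ring

lemma pairDet_swap (x y : R × R) : pairDet y x = -pairDet x y := by
  simp only [pairDet]; ring

lemma pairDet_neg_left (x y : R × R) : pairDet (-x) y = -pairDet x y := by
  simp only [pairDet, Prod.fst_neg, Prod.snd_neg]; ring

end PairDet

section IntPair

variable {u v x y : ℤ × ℤ}

lemma exists_smul_eq_of_abs_pairDet_eq_one (hu : |pairDet u x| = 1) (hv : |pairDet v x| = 1) :
    ∃ y, (y = x ∨ y = -x) ∧ (pairDet u v • y = v + u ∨ pairDet u v • y = v - u) := by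
  have hcramer := pairDet_smul_eq_sub u v x
  rcases abs_eq zero_le_one |>.mp hu with hu | hu <;>
    rcases abs_eq zero_le_one |>.mp hv with hv | hv <;> rw [hu, hv] at hcramer
  · exact ⟨x, .inl rfl, .inr (by rw [hcramer]; module)⟩
  · exact ⟨x, .inl rfl, .inl (by rw [hcramer]; module)⟩
  · exact ⟨-x, .inr rfl, .inl (by rw [smul_neg, hcramer]; module)⟩
  · exact ⟨-x, .inr rfl, .inr (by rw [smul_neg, hcramer]; module)⟩

lemma abs_pairDet_eq_one_of_smul_eq (hD : pairDet u v ≠ 0)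
    (hx : pairDet u v • x = v + u ∨ pairDet u v • x = v - u) :
    |pairDet u x| = 1 ∧ |pairDet v x| = 1 := by
  have hdet (w : ℤ × ℤ) : pairDet u v * pairDet w x = pairDet w (pairDet u v • x) :=
    (pairDet_smul_right _ w x).symm
  rcases hx with hx | hx
  · have hu : pairDet u x = 1 := mul_left_cancel₀ hD <| by
      rw [hdet, hx]; simp only [pairDet, Prod.fst_add, Prod.snd_add]; ring
    have hv : pairDet v x = -1 := mul_left_cancel₀ hD <| by
      rw [hdet, hx]; simp only [pairDet, Prod.fst_add, Prod.snd_add]; ring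
    simp [hu, hv]
  · have hu : pairDet u x = 1 := mul_left_cancel₀ hD <| by
      rw [hdet, hx]; simp only [pairDet, Prod.fst_sub, Prod.snd_sub]; ring
    have hv : pairDet v x = 1 := mul_left_cancel₀ hD <| by
      rw [hdet, hx]; simp only [pairDet, Prod.fst_sub, Prod.snd_sub]; ring
    simp [hu, hv]

lemma mul_pairDet_eq_two_of_smul_eq (hD : pairDet u v ≠ 0) (hx : pairDet u v • x = v + u)
    (hy : pairDet u v • y = v - u) : pairDet u v * pairDet x y = 2 := by
  refine mul_left_cancel₀ hD ?_
  rw [← mul_assoc, ← pairDet_smul_smul, hx, hy]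
  simp only [pairDet, Prod.fst_add, Prod.snd_add, Prod.fst_sub, Prod.snd_sub]; ring

lemma exists_two_smul_eq_sub (hu : IsCoprime u.1 u.2) (hv : IsCoprime v.1 v.2)
    (h : 2 ∣ pairDet u v) : ∃ y : ℤ × ℤ, (2 : ℤ) • y = v - u := by
  have hmod2 : ∀ P Q R S : ZMod 2, IsCoprime P Q → IsCoprime R S → P * S - Q * R = 0 →
      R - P = 0 ∧ S - Q = 0 := by
    unfold IsCoprime; decide
  have h2 : ((pairDet u v : ℤ) : ZMod 2) = 0 := (ZMod.intCast_zmod_eq_zero_iff_dvd _ 2).mpr h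
  simp only [pairDet, Int.cast_sub, Int.cast_mul] at h2
  obtain ⟨h1, h2⟩ := hmod2 _ _ _ _ hu.intCast hv.intCast h2
  rw [← Int.cast_sub, ZMod.intCast_zmod_eq_zero_iff_dvd] at h1 h2
  obtain ⟨k, hk⟩ := h1
  obtain ⟨l, hl⟩ := h2
  exact ⟨(k, l), Prod.ext (by simp [hk]) (by simp [hl])⟩

lemma exists_smul_eq_add_and_sub (hu : IsCoprime u.1 u.2) (hv : IsCoprime v.1 v.2)
    (hD : |pairDet u v| = 2) :
    (∃ x, pairDet u v • x = v + u) ∧ ∃ y, pairDet u v • y = v - u := by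
  obtain ⟨y, hy⟩ := exists_two_smul_eq_sub hu hv ((dvd_abs _ _).mp (hD ▸ dvd_rfl))
  rcases abs_eq zero_le_two |>.mp hD with hD | hD <;> rw [hD]
  · exact ⟨⟨y + u, by linear_combination (norm := module) hy⟩, y, hy⟩
  · exact ⟨⟨-(y + u), by linear_combination (norm := module) hy⟩, -y,
      by linear_combination (norm := module) hy⟩

end IntPair

namespace FareyGraph

variable {a b : FareyPair}

lemma mk_eq_mk_of_smul_eq_smul {c : ℤ} (hc : c ≠ 0) {z z' : FareyPair} (h : c • z.1 = c • z'.1) :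
    (⟦z⟧ : FareyVertex) = ⟦z'⟧ :=
  congrArg _ (Subtype.ext (smul_right_injective (ℤ × ℤ) hc h))

lemma mk_ne_mk_of_pairDet_ne_zero {z z' : FareyPair} (h : pairDet z.1 z'.1 ≠ 0) :
    (⟦z⟧ : FareyVertex) ≠ ⟦z'⟧ := by
  intro hzz'
  rcases Quotient.exact hzz' with h' | h' <;> change z.1 = _ at h' <;>
    simp [h', pairDet_neg_left, pairDet_self] at h

lemma exists_rep_smul_eq_of_mem_commonNeighbors {w : FareyVertex}
    (hw : w ∈ FareyGraph.commonNeighbors ⟦a⟧ ⟦b⟧) :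
    ∃ z : FareyPair, ⟦z⟧ = w ∧
      (pairDet a.1 b.1 • z.1 = b.1 + a.1 ∨ pairDet a.1 b.1 • z.1 = b.1 - a.1) := by
  induction w using Quotient.inductionOn with | h z =>
  obtain ⟨y, hyz, hy⟩ := exists_smul_eq_of_abs_pairDet_eq_one hw.1 hw.2
  have hy_coprime : IsCoprime y.1 y.2 := by
    rcases hyz with rfl | rfl
    exacts [z.2, z.2.neg_neg]
  exact ⟨⟨y, hy_coprime⟩, Quotient.sound hyz, hy⟩

lemma pairDet_dvd_two_of_mem_commonNeighbors (hD : pairDet a.1 b.1 ≠ 0) {x y : FareyVertex}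
    (hxy : x ≠ y) (hx : x ∈ FareyGraph.commonNeighbors ⟦a⟧ ⟦b⟧)
    (hy : y ∈ FareyGraph.commonNeighbors ⟦a⟧ ⟦b⟧) : pairDet a.1 b.1 ∣ 2 := by
  obtain ⟨x, rfl, hx'⟩ := exists_rep_smul_eq_of_mem_commonNeighbors hx
  obtain ⟨y, rfl, hy'⟩ := exists_rep_smul_eq_of_mem_commonNeighbors hy
  rcases hx' with hx | hx <;> rcases hy' with hy | hy
  · exact absurd (mk_eq_mk_of_smul_eq_smul hD (hx.trans hy.symm)) hxy
  · exact ⟨_, (mul_pairDet_eq_two_of_smul_eq hD hx hy).symm⟩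
  · exact ⟨_, (mul_pairDet_eq_two_of_smul_eq hD hy hx).symm⟩
  · exact absurd (mk_eq_mk_of_smul_eq_smul hD (hx.trans hy.symm)) hxy

lemma encard_commonNeighbors_eq_two (hD : |pairDet a.1 b.1| = 2) :
    (FareyGraph.commonNeighbors ⟦a⟧ ⟦b⟧).encard = 2 := by
  have hD0 : pairDet a.1 b.1 ≠ 0 := fun h ↦ by simp [h] at hD
  obtain ⟨⟨x, hx⟩, y, hy⟩ := exists_smul_eq_add_and_sub a.2 b.2 hD
  have hx_adj := abs_pairDet_eq_one_of_smul_eq hD0 (.inl hx)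
  have hy_adj := abs_pairDet_eq_one_of_smul_eq hD0 (.inr hy)
  let x' : FareyPair := ⟨x, coprime_of_det _ _ a.1.1 a.1.2
    (show |pairDet x a.1| = 1 by rw [pairDet_swap, abs_neg]; exact hx_adj.1)⟩
  let y' : FareyPair := ⟨y, coprime_of_det _ _ a.1.1 a.1.2
    (show |pairDet y a.1| = 1 by rw [pairDet_swap, abs_neg]; exact hy_adj.1)⟩
  have hne : (⟦x'⟧ : FareyVertex) ≠ ⟦y'⟧ := mk_ne_mk_of_pairDet_ne_zero <|
    right_ne_zero_of_mul ((mul_pairDet_eq_two_of_smul_eq hD0 hx hy).symm ▸ two_ne_zero)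
  rw [← Set.encard_pair hne]
  congr 1
  ext w
  refine ⟨fun hw ↦ ?_, ?_⟩
  · obtain ⟨z, rfl, hz⟩ := exists_rep_smul_eq_of_mem_commonNeighbors hw
    rcases hz with hz | hz
    · exact .inl (mk_eq_mk_of_smul_eq_smul hD0 (hz.trans hx.symm))
    · exact .inr (mk_eq_mk_of_smul_eq_smul hD0 (hz.trans hy.symm))
  · rintro (rfl | rfl)
    exacts [hx_adj, hy_adj]

end FareyGraph

/-- If `(p,q)` and `(r,s)` are coprime pairs with `|ps - qr| ≥ 2`
(so `[p,q]` and `[r,s]` are distinct and non-adjacent in the Farey graph), then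
`[p,q]` and `[r,s]` have exactly two common neighbors iff `|ps - qr| = 2`. -/
theorem farey_two_common_neighbors_iff (p q r s : ℤ)
    (hpq : IsCoprime p q) (hrs : IsCoprime r s) (h : 2 ≤ |p * s - q * r|) :
    {w : FareyVertex | FareyGraph.Adj (fareyMk p q hpq) w ∧
        FareyGraph.Adj (fareyMk r s hrs) w}.encard = 2 ↔
      |p * s - q * r| = 2 := by
  let a : FareyPair := ⟨(p, q), hpq⟩
  let b : FareyPair := ⟨(r, s), hrs⟩
  change (FareyGraph.commonNeighbors ⟦a⟧ ⟦b⟧).encard = 2 ↔ |pairDet a.1 b.1| = 2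
  change 2 ≤ |pairDet a.1 b.1| at h
  refine ⟨fun hcard ↦ ?_, FareyGraph.encard_commonNeighbors_eq_two⟩
  obtain ⟨x, y, hxy, hS⟩ := Set.encard_eq_two.mp hcard
  have hD : pairDet a.1 b.1 ≠ 0 := abs_pos.mp (by omega)
  have hdvd := FareyGraph.pairDet_dvd_two_of_mem_commonNeighbors hD hxy
    (by rw [hS]; simp) (by rw [hS]; simp)
  exact le_antisymm (Int.le_of_dvd two_pos ((abs_dvd _ _).mpr hdvd)) h
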